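/- arXiv:2411.03145 — 4 statements merged into one kernel-verified Lean document; each statement's English description precedes it below -/
import Mathlib

section
/- Let f₂ : [0,2] → ℝ be defined by f₂(x) = x² for x ≠ 1 and f₂(1) = −1, and let L be the linear functional on the span of {1, x, f₂} represented by the measure λ + (8/3)·δ₁ on [0,2], where λ is Lebesgue measure. Then there is no continuous function ρ : [0,2] → ℝ with ρ ≥ 0 such that L(g) = ∫_0^2 g(x)·ρ(x) dx for all g in the span of {1, x, f₂}. -/
/-!
Since `f₂ = x²` Lebesgue-a.e. while `f₂(1) = -1`, the functional gives
`L(f₂) = ∫₀² x² dx - 8/3 = 0`. A nonnegative density `ρ` would then satisfy `∫₀² x² ρ = 0`,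
so `ρ = 0` a.e. on `(0, 2]`, and `L(1) = ∫₀² ρ = 0`, whereas `L(1) = 2 + 8/3`.
-/

open MeasureTheory Filter Real
open scoped ENNReal

theorem ite_eq_ae_eq {α β : Type*} [MeasurableSpace α] [DecidableEq α] {μ : Measure α}
    [NullSingletonClass μ] (f : α → β) (a : α) (b : β) :
    (fun x => if x = a then b else f x) =ᵐ[μ] f := by
  filter_upwards [μ.ae_ne a] with x hx
  rw [if_neg hx]

theorem integral_add_smul_dirac {α E : Type*} [MeasurableSpace α] [MeasurableSingletonClass α]
    [NormedAddCommGroup E] [NormedSpace ℝ E] [CompleteSpace E] {μ : Measure α} {g : α → E}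
    (hg : Integrable g μ) {c : ℝ≥0∞} (hc : c ≠ ∞) (a : α) :
    ∫ x, g x ∂(μ + c • Measure.dirac a) = ∫ x, g x ∂μ + c.toReal • g a := by
  have hg_dirac : Integrable g (c • Measure.dirac a) :=
    (integrable_dirac enorm_lt_top).smul_measure hc
  rw [integral_add_measure hg hg_dirac, integral_smul_measure, integral_dirac]

theorem intervalIntegral_eq_zero_of_weighted_eq_zero {a b : ℝ} (hab : a ≤ b) {w ρ : ℝ → ℝ}
    (hw : ∀ x ∈ Set.Ioc a b, 0 < w x) (hρ : ∀ x ∈ Set.Ioc a b, 0 ≤ ρ x)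
    (hwρ : IntervalIntegrable (fun x => w x * ρ x) volume a b)
    (h : ∫ x in a..b, w x * ρ x = 0) : ∫ x in a..b, ρ x = 0 := by
  have hnonneg : 0 ≤ᵐ[volume.restrict (Set.Ioc a b)] fun x => w x * ρ x :=
    (ae_restrict_iff' measurableSet_Ioc).2 <|
      ae_of_all _ fun x hx => mul_nonneg (hw x hx).le (hρ x hx)
  have hzero := (intervalIntegral.integral_eq_zero_iff_of_le_of_nonneg_ae hab hnonneg hwρ).1 h
  rw [intervalIntegral.integral_of_le hab]
  refine integral_eq_zero_of_ae ?_
  filter_upwards [hzero, ae_restrict_mem measurableSet_Ioc] with x hx hmem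
  exact (mul_eq_zero.1 hx).resolve_left (hw x hmem).ne'

theorem integral_moment_bumpedSquare :
    ∫ x, (if x = 1 then (-1 : ℝ) else x ^ 2)
      ∂(volume.restrict (Set.Icc (0:ℝ) 2) + ((8:ℝ≥0∞)/3) • Measure.dirac 1) = 0 := by
  have hsq : (fun x : ℝ => if x = 1 then (-1 : ℝ) else x ^ 2) =ᵐ[volume] (· ^ 2) :=
    ite_eq_ae_eq _ _ _
  have hint : IntegrableOn (fun x : ℝ => if x = 1 then (-1 : ℝ) else x ^ 2) (Set.Icc 0 2) :=
    (continuous_pow 2).integrableOn_Icc.congr_fun_ae (ae_restrict_of_ae hsq.symm)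
  rw [integral_add_smul_dirac hint (by finiteness), integral_congr_ae (ae_restrict_of_ae hsq),
    integral_Icc_eq_integral_Ioc, ← intervalIntegral.integral_of_le zero_le_two, integral_pow,
    ENNReal.toReal_div]
  norm_num

theorem integral_moment_one :
    ∫ _, (1 : ℝ) ∂(volume.restrict (Set.Icc (0:ℝ) 2) + ((8:ℝ≥0∞)/3) • Measure.dirac 1)
      = 2 + 8 / 3 := by
  rw [integral_add_smul_dirac (integrable_const 1) (by finiteness), setIntegral_const,
    Real.volume_real_Icc, ENNReal.toReal_div]
  norm_num

/-- The moment functional on `span {1, x, f₂}` represented by `λ + (8/3)·δ₁` on `[0,2]`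
has no nonnegative continuous density with respect to Lebesgue measure. -/
theorem no_continuous_density :
    ¬ ∃ ρ : ℝ → ℝ, ContinuousOn ρ (Set.Icc 0 2) ∧ (∀ x ∈ Set.Icc (0:ℝ) 2, 0 ≤ ρ x) ∧
      ∀ g ∈ Submodule.span ℝ ({(fun _ => (1:ℝ)), (fun x => x),
          (fun x => if x = 1 then (-1 : ℝ) else x ^ 2)} : Set (ℝ → ℝ)),
        (∫ x, g x ∂((volume.restrict (Set.Icc (0:ℝ) 2)) + ((8:ℝ≥0∞)/3) • Measure.dirac 1))
          = ∫ x in (0:ℝ)..2, g x * ρ x := by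
  rintro ⟨ρ, hρc, hρ0, hL⟩
  have hsq : ∫ x in (0:ℝ)..2, x ^ 2 * ρ x = 0 :=
    calc ∫ x in (0:ℝ)..2, x ^ 2 * ρ x
        = ∫ x in (0:ℝ)..2, (if x = 1 then (-1 : ℝ) else x ^ 2) * ρ x := by
          refine intervalIntegral.integral_congr_ae ?_
          filter_upwards [ite_eq_ae_eq (μ := volume) (fun x : ℝ => x ^ 2) 1 (-1)] with x hx _
          rw [hx]
      _ = 0 := by rw [← hL _ (Submodule.subset_span (by simp)), integral_moment_bumpedSquare]
  have hρ : ∫ x in (0:ℝ)..2, ρ x = 0 :=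
    intervalIntegral_eq_zero_of_weighted_eq_zero zero_le_two (fun x hx => pow_pos hx.1 2)
      (fun x hx => hρ0 x (Set.Ioc_subset_Icc_self hx))
      (((continuous_pow 2).continuousOn.mul hρc).intervalIntegrable_of_Icc zero_le_two) hsq
  have h1 := hL (fun _ => 1) (Submodule.subset_span (by simp))
  simp only [integral_moment_one, one_mul, hρ] at h1
  norm_num at h1
end

section
/- Let X be a measurable space, V a finite-dimensional vector space of measurable functions f : X → ℝ, and suppose for every x ∈ X and every ε > 0 there exists a measure ν on X, absolutely continuous with respect to a fixed measure λ, such that |∫_X f dν − f(x)| < ε for all f in a fixed basis of V. If L : V → ℝ lies in the interior of the moment cone of V (the cone of functionals represented by measures on X), then L is represented by a measure absolutely continuous with respect to λ, and in fact by a finite positive combination of measures from the Dirac-approximating family. -/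
open Finset
open scoped NNReal

lemma cone_caratheodory {n : ℕ} :
    ∀ (N : ℕ) (t : Finset (Fin n → ℝ)), t.card ≤ N →
      ∀ (c : (Fin n → ℝ) → ℝ), (∀ v ∈ t, 0 < c v) →
      ∀ s : Fin n → ℝ, (∑ v ∈ t, c v • v = s) →
      ∃ t' ⊆ t, t'.card ≤ n ∧ ∃ c' : (Fin n → ℝ) → ℝ,
        (∀ v ∈ t', 0 < c' v) ∧ ∑ v ∈ t', c' v • v = s := by
  classical
  intro N
  induction N with
  | zero =>
    intro t ht c hc s hs
    exact ⟨t, subset_rfl, le_trans ht (Nat.zero_le n), c, hc, hs⟩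
  | succ N ih =>
    intro t ht c hc s hs
    by_cases hcard : t.card ≤ n
    · exact ⟨t, subset_rfl, hcard, c, hc, hs⟩
    push_neg at hcard
    have hnli : ¬ LinearIndependent ℝ (fun v : {x // x ∈ t} => (v : Fin n → ℝ)) := by
      intro h
      have h1 := h.fintype_card_le_finrank
      rw [Fintype.card_coe] at h1
      have h2 : Module.finrank ℝ (Fin n → ℝ) = n := by simp
      omega
    obtain ⟨g, hg0, i0, hgi0⟩ := Fintype.not_linearIndependent_iff.1 hnli
    have conv : ∀ G : {x // x ∈ t} → ℝ,
        ∑ v ∈ t, (if h : v ∈ t then G ⟨v, h⟩ else 0) • v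
          = ∑ i : {x // x ∈ t}, G i • (i : Fin n → ℝ) := by
      intro G
      rw [← Finset.sum_coe_sort t (fun v => (if h : v ∈ t then G ⟨v, h⟩ else 0) • v)]
      exact Finset.sum_congr rfl fun i _ => by simp [i.2]
    have hexa : ∃ a : (Fin n → ℝ) → ℝ, (∑ v ∈ t, a v • v = 0) ∧ ∃ v ∈ t, 0 < a v := by
      rcases lt_or_gt_of_ne hgi0 with h | h
      · refine ⟨fun v => if h : v ∈ t then -g ⟨v, h⟩ else 0, ?_, ⟨↑i0, i0.2, ?_⟩⟩
        · rw [conv (fun i => -g i)]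
          simp only [neg_smul]
          rw [Finset.sum_neg_distrib, hg0, neg_zero]
        · simp only [i0.2, dif_pos, Subtype.coe_eta]
          linarith
      · refine ⟨fun v => if h : v ∈ t then g ⟨v, h⟩ else 0, ?_, ⟨↑i0, i0.2, ?_⟩⟩
        · rw [conv g, hg0]
        · simp only [i0.2, dif_pos, Subtype.coe_eta]
          linarith
    obtain ⟨a, hasum, hapos⟩ := hexa
    set F := t.filter (fun v => 0 < a v) with hF
    have hFne : F.Nonempty := by
      obtain ⟨v, hv, hv'⟩ := hapos
      exact ⟨v, Finset.mem_filter.2 ⟨hv, hv'⟩⟩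
    obtain ⟨v0, hv0F, hv0min⟩ := Finset.exists_min_image F (fun v => c v / a v) hFne
    have hv0t : v0 ∈ t := (Finset.mem_filter.1 hv0F).1
    have hav0 : 0 < a v0 := (Finset.mem_filter.1 hv0F).2
    set r := c v0 / a v0 with hr
    have hr0 : 0 ≤ r := div_nonneg (hc v0 hv0t).le hav0.le
    set c2 : (Fin n → ℝ) → ℝ := fun v => c v - r * a v with hc2
    have hc2nn : ∀ v ∈ t, 0 ≤ c2 v := by
      intro v hv
      rcases le_or_gt (a v) 0 with h | h
      · have : r * a v ≤ 0 := mul_nonpos_of_nonneg_of_nonpos hr0 h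
        have := hc v hv
        simp only [hc2]
        linarith
      · have hvF : v ∈ F := Finset.mem_filter.2 ⟨hv, h⟩
        have hle := hv0min v hvF
        have : r * a v ≤ c v := by
          have h2 := mul_le_mul_of_nonneg_right hle h.le
          rwa [div_mul_cancel₀ _ h.ne'] at h2
        simp only [hc2]; linarith
    have hc2v0 : c2 v0 = 0 := by
      simp only [hc2, hr]
      field_simp
      ring
    have hsum2 : ∑ v ∈ t, c2 v • v = s := by
      simp only [hc2, sub_smul]
      rw [Finset.sum_sub_distrib]
      have : ∑ v ∈ t, (r * a v) • v = r • ∑ v ∈ t, a v • v := by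
        rw [Finset.smul_sum]
        exact Finset.sum_congr rfl fun v _ => by rw [smul_smul]
      rw [this, hasum, smul_zero, sub_zero, hs]
    set t2 := t.filter (fun v => 0 < c2 v) with ht2
    have hsub : t2 ⊆ t := Finset.filter_subset _ _
    have hsum3 : ∑ v ∈ t2, c2 v • v = s := by
      rw [ht2, Finset.sum_filter_of_ne, hsum2]
      intro v hv hne
      rcases (hc2nn v hv).lt_or_eq with h | h
      · exact h
      · exact absurd (by rw [← h, zero_smul]) hne
    have hcard2 : t2.card ≤ N := by
      have hss : t2 ⊂ t := by
        refine (Finset.ssubset_iff_of_subset hsub).2 ⟨v0, hv0t, ?_⟩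
        simp [ht2, hc2v0]
      have := Finset.card_lt_card hss
      omega
    obtain ⟨t', h1, h2, c', h3, h4⟩ :=
      ih t2 hcard2 c2 (fun v hv => (Finset.mem_filter.1 hv).2) s hsum3
    exact ⟨t', h1.trans hsub, h2, c', h3, h4⟩

lemma cone_mem_of_mem_interior_closure {n : ℕ} (S : Submodule ℝ≥0 (Fin n → ℝ))
    {x : Fin n → ℝ} (hx : x ∈ interior (closure (S : Set (Fin n → ℝ)))) :
    x ∈ S := by
  classical
  rcases Nat.eq_zero_or_pos n with hn | hn
  · subst hn
    have : x = 0 := Subsingleton.elim _ _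
    rw [this]; exact S.zero_mem
  obtain ⟨r₀, hr₀pos, hball⟩ := Metric.isOpen_iff.1 isOpen_interior x hx
  have hball' : Metric.ball x r₀ ⊆ closure (S : Set (Fin n → ℝ)) :=
    fun z hz => interior_subset (hball hz)
  have hnR : (0:ℝ) < n := by exact_mod_cast hn
  set r : ℝ := r₀ / 2 with hrdef
  have hr : 0 < r := by positivity
  set ε : ℝ := r / (4 * n) with hεdef
  have hε : 0 < ε := by positivity
  have hεr : ε / r = 1 / (4 * n) := by rw [hεdef]; field_simp
  set sgn : Bool → ℝ := fun tf => if tf then 1 else -1 with hsgn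
  set p : Fin n × Bool → (Fin n → ℝ) := fun q => x + (sgn q.2 * r) • (Pi.single q.1 1 : Fin n → ℝ) with hp
  have hpcl : ∀ q, p q ∈ closure (S : Set (Fin n → ℝ)) := by
    intro q
    apply hball'
    rw [Metric.mem_ball, hp]
    have : dist (x + (sgn q.2 * r) • (Pi.single q.1 1 : Fin n → ℝ)) x
        = ‖(sgn q.2 * r) • (Pi.single q.1 1 : Fin n → ℝ)‖ := by
      rw [dist_eq_norm]; congr 1; abel
    rw [this, norm_smul, Pi.norm_single]
    have : ‖sgn q.2 * r‖ = r := by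
      rcases q.2 <;> simp [hsgn, abs_of_pos hr]
    rw [this]
    simp only [norm_one, mul_one]
    rw [hrdef]; linarith
  have hymem : ∀ q, ∃ z ∈ (S : Set (Fin n → ℝ)), dist (p q) z < ε :=
    fun q => Metric.mem_closure_iff.1 (hpcl q) ε hε
  choose y hyS hyd using hymem
  have hdiff : ∀ q, ‖y q - p q‖ < ε := by
    intro q
    rw [← dist_eq_norm, dist_comm]
    exact hyd q
  set z : Fin n → (Fin n → ℝ) :=
    fun i => (1 / (2 * r)) • ((y (i, true) - p (i, true)) - (y (i, false) - p (i, false)))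
    with hz
  have hznorm : ∀ i, ‖z i‖ ≤ ε / r := by
    intro i
    rw [hz]
    simp only
    rw [norm_smul]
    have h1 : ‖(y (i, true) - p (i, true)) - (y (i, false) - p (i, false))‖ ≤ ε + ε :=
      le_trans (norm_sub_le _ _) (by linarith [(hdiff (i, true)).le, (hdiff (i, false)).le])
    have h2 : ‖(1 : ℝ) / (2 * r)‖ = 1 / (2 * r) := by
      rw [Real.norm_eq_abs, abs_of_pos]; positivity
    rw [h2]
    calc 1 / (2 * r) * ‖(y (i, true) - p (i, true)) - (y (i, false) - p (i, false))‖
        ≤ 1 / (2 * r) * (ε + ε) := by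
          apply mul_le_mul_of_nonneg_left h1; positivity
      _ = ε / r := by field_simp; ring
  set D : (Fin n → ℝ) →ₗ[ℝ] (Fin n → ℝ) :=
    ∑ i, LinearMap.smulRight (LinearMap.proj i) (z i) with hD
  have hDapp : ∀ v, D v = ∑ i, v i • z i := by
    intro v
    rw [hD]
    simp [LinearMap.sum_apply]
  have hDbound : ∀ v, ‖D v‖ ≤ (1 / 4) * ‖v‖ := by
    intro v
    rw [hDapp]
    calc ‖∑ i, v i • z i‖ ≤ ∑ i, ‖v i • z i‖ := norm_sum_le _ _
      _ ≤ ∑ _i : Fin n, ‖v‖ * (ε / r) := by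
          apply Finset.sum_le_sum
          intro i _
          rw [norm_smul]
          exact mul_le_mul (norm_le_pi_norm v i) (hznorm i) (norm_nonneg _) (norm_nonneg _)
      _ = n * (‖v‖ * (ε / r)) := by rw [Finset.sum_const, Finset.card_univ, Fintype.card_fin]; simp
      _ = (1 / 4) * ‖v‖ := by rw [hεr]; field_simp
  have hTinj : Function.Injective ((LinearMap.id + D : (Fin n → ℝ) →ₗ[ℝ] (Fin n → ℝ))) := by
    rw [injective_iff_map_eq_zero]
    intro v hv
    have hveq : (LinearMap.id + D : (Fin n → ℝ) →ₗ[ℝ] (Fin n → ℝ)) v = v + D v := rfl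
    rw [hveq] at hv
    have h1 : ‖v‖ = ‖D v‖ := by
      have h := eq_neg_of_add_eq_zero_left hv
      conv_lhs => rw [h]
      rw [norm_neg]
    have h2 := hDbound v
    have h3 : ‖v‖ ≤ 0 := by linarith
    exact norm_le_zero_iff.1 h3
  have hTsurj := LinearMap.injective_iff_surjective.1 hTinj
  set w : ℝ := 1 / (2 * n) with hw
  have hwpos : 0 < w := by rw [hw]; positivity
  set e : Fin n → ℝ := (∑ q : Fin n × Bool, w • y q) - x with he
  have hsum_p : ∑ q : Fin n × Bool, w • p q = x := by
    rw [← Finset.smul_sum]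
    have hbool : ∀ i : Fin n, ∑ tf : Bool, p (i, tf) = x + x := by
      intro i
      rw [Fintype.sum_bool]
      simp only [hp, hsgn]
      match_scalars <;> norm_num
    have : ∑ q : Fin n × Bool, p q = (2 * (n:ℝ)) • x := by
      rw [Fintype.sum_prod_type]
      simp_rw [hbool]
      rw [Finset.sum_const, Finset.card_univ, Fintype.card_fin]
      match_scalars
      push_cast
      ring
    rw [this, smul_smul, hw]
    rw [show 1 / (2 * (n:ℝ)) * (2 * n) = 1 by field_simp, one_smul]
  have herr : ‖e‖ ≤ ε := by
    have he2 : e = ∑ q : Fin n × Bool, w • (y q - p q) := by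
      rw [he]
      rw [show (∑ q : Fin n × Bool, w • (y q - p q))
          = (∑ q : Fin n × Bool, w • y q) - ∑ q : Fin n × Bool, w • p q by
        rw [← Finset.sum_sub_distrib]; exact Finset.sum_congr rfl fun q _ => by rw [smul_sub]]
      rw [hsum_p]
    rw [he2]
    calc ‖∑ q : Fin n × Bool, w • (y q - p q)‖ ≤ ∑ q : Fin n × Bool, ‖w • (y q - p q)‖ :=
          norm_sum_le _ _
      _ ≤ ∑ _q : Fin n × Bool, w * ε := by
          apply Finset.sum_le_sum
          intro q _
          rw [norm_smul, Real.norm_eq_abs, abs_of_pos hwpos]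
          exact mul_le_mul_of_nonneg_left (hdiff q).le hwpos.le
      _ = (2 * n) * (w * ε) := by
          rw [Finset.sum_const, Finset.card_univ, Fintype.card_prod, Fintype.card_fin,
            Fintype.card_bool, nsmul_eq_mul]
          push_cast
          ring
      _ = ε := by rw [hw]; field_simp
  obtain ⟨v, hv⟩ := hTsurj (-e)
  have hveq : v + D v = -e := hv
  have hvbound : ‖v‖ ≤ 2 * ε := by
    have h1 : v = -e - D v := by linear_combination (norm := module) hveq
    have h2 : ‖v‖ ≤ ‖e‖ + ‖D v‖ := by
      conv_lhs => rw [h1]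
      calc ‖-e - D v‖ ≤ ‖-e‖ + ‖D v‖ := norm_sub_le _ _
        _ = ‖e‖ + ‖D v‖ := by rw [norm_neg]
    have h3 := hDbound v
    linarith
  set c' : Fin n × Bool → ℝ := fun q => sgn q.2 * (v q.1 / (2 * r)) with hc'
  have hc'bound : ∀ q, |c' q| < w := by
    intro q
    have h1 : |v q.1| ≤ ‖v‖ := by
      rw [← Real.norm_eq_abs]; exact norm_le_pi_norm v q.1
    have h2 : |c' q| = |v q.1| / (2 * r) := by
      rw [hc', abs_mul]
      have : |sgn q.2| = 1 := by rcases q.2 <;> simp [hsgn]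
      rw [this, one_mul, abs_div, abs_of_pos (by positivity : (0:ℝ) < 2 * r)]
    rw [h2]
    have h3 : |v q.1| / (2 * r) ≤ ε / r := by
      rw [show ε / r = (2 * ε) / (2 * r) by field_simp]
      gcongr
      linarith
    rw [hεr] at h3
    rw [hw]
    calc |v q.1| / (2 * r) ≤ 1 / (4 * n) := h3
      _ < 1 / (2 * n) := by
          apply one_div_lt_one_div_of_lt
          · positivity
          · linarith
  set γ : Fin n × Bool → ℝ := fun q => w + c' q with hγ
  have hγpos : ∀ q, 0 < γ q := by
    intro q
    have := hc'bound q
    have := abs_lt.1 this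
    rw [hγ]
    simp only
    linarith [this.1]
  -- the key computation
  have hc'T : ∀ i, c' (i, true) = v i / (2 * r) := by
    intro i; simp [hc', hsgn]
  have hc'F : ∀ i, c' (i, false) = -(v i / (2 * r)) := by
    intro i; simp [hc', hsgn]
  have hpT : ∀ i : Fin n, p (i, true) = x + r • (Pi.single i 1 : Fin n → ℝ) := by
    intro i; simp [hp, hsgn]
  have hpF : ∀ i : Fin n, p (i, false) = x + (-r) • (Pi.single i 1 : Fin n → ℝ) := by
    intro i; simp [hp, hsgn]
  have h2r : (2 : ℝ) * r ≠ 0 := by positivity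
  have claim1 : ∑ q : Fin n × Bool, c' q • p q = v := by
    have hbool : ∀ i : Fin n, ∑ tf : Bool, c' (i, tf) • p (i, tf)
        = (Pi.single i (v i) : Fin n → ℝ) := by
      intro i
      rw [Fintype.sum_bool]
      have hsingle : (Pi.single i (v i) : Fin n → ℝ) = v i • (Pi.single i 1 : Fin n → ℝ) := by
        rw [← Pi.single_smul, smul_eq_mul, mul_one]
      rw [hsingle, hc'T, hc'F, hpT, hpF]
      match_scalars
      · ring
      · field_simp
        ring
    rw [Fintype.sum_prod_type]
    simp_rw [hbool]
    exact Finset.univ_sum_single v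
  have claim2 : ∑ q : Fin n × Bool, c' q • (y q - p q) = D v := by
    rw [hDapp]
    rw [Fintype.sum_prod_type]
    apply Finset.sum_congr rfl
    intro i _
    rw [Fintype.sum_bool, hc'T, hc'F, hz]
    simp only
    rw [hpT, hpF]
    match_scalars <;> (field_simp; try ring)
  have hsum_y : ∑ q : Fin n × Bool, w • y q = x + e := by
    rw [he]; abel
  have hxsum : ∑ q : Fin n × Bool, γ q • y q = x := by
    have hsplit : ∀ q, γ q • y q = w • y q + (c' q • p q + c' q • (y q - p q)) := by
      intro q
      rw [hγ]
      simp only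
      module
    simp_rw [hsplit]
    rw [Finset.sum_add_distrib, Finset.sum_add_distrib, hsum_y, claim1, claim2]
    have : v + D v = -e := hveq
    linear_combination (norm := module) this
  rw [← hxsum]
  apply Submodule.sum_mem
  intro q _
  have hmem := S.smul_mem (⟨γ q, (hγpos q).le⟩ : ℝ≥0) (hyS q)
  exact hmem

open MeasureTheory

/-- If there is a Dirac-approximating family of measures absolutely continuous with
respect to `lam` for the span of `b 0, …, b (n-1)`, then every functional in the interior
of the moment cone (encoded by its moment vector `s`) is represented by a finite positive
combination of measures from the family; in particular by a measure absolutely continuous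
with respect to `lam`. -/
theorem interior_momentCone_absCont {X : Type*} [MeasurableSpace X] (n : ℕ)
    (b : Fin n → X → ℝ) (hmeas : ∀ i, Measurable (b i)) (lam : Measure X)
    {Λ : Type*} (δ : Λ → X → Measure X)
    (hac : ∀ σ x, δ σ x ≪ lam)
    (hint : ∀ σ x i, Integrable (b i) (δ σ x))
    (happrox : ∀ (x : X) (ε : ℝ), 0 < ε → ∃ σ : Λ,
      ∀ i, |(∫ y, b i y ∂(δ σ x)) - b i x| < ε)
    (s : Fin n → ℝ)
    (hs : s ∈ interior {v : Fin n → ℝ | ∃ μ : Measure X,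
      (∀ i, Integrable (b i) μ) ∧ ∀ i, v i = ∫ y, b i y ∂μ}) :
    (∃ k : ℕ, k ≤ n ∧ ∃ (c : Fin k → ℝ) (σ : Fin k → Λ) (x : Fin k → X),
      (∀ j, 0 < c j) ∧ ∀ i, s i = ∑ j, c j * ∫ y, b i y ∂(δ (σ j) (x j))) ∧
    ∃ μ : Measure X, μ ≪ lam ∧ (∀ i, Integrable (b i) μ) ∧
      ∀ i, s i = ∫ y, b i y ∂μ := by
  classical
  set mv : Λ × X → (Fin n → ℝ) := fun q i => ∫ y, b i y ∂(δ q.1 q.2) with hmv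
  set Dset : Set (Fin n → ℝ) := Set.range mv with hDset
  set S : Submodule ℝ≥0 (Fin n → ℝ) := Submodule.span ℝ≥0 Dset with hS
  have hconvS : Convex ℝ (S : Set (Fin n → ℝ)) := by
    intro u hu v hv ta tb hta htb _
    have h1 : ta • u ∈ S := by
      have := S.smul_mem ⟨ta, hta⟩ hu
      exact this
    have h2 : tb • v ∈ S := by
      have := S.smul_mem ⟨tb, htb⟩ hv
      exact this
    exact S.add_mem h1 h2
  have hb_cl : ∀ x : X, (fun i => b i x) ∈ closure (S : Set (Fin n → ℝ)) := by
    intro x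
    rw [Metric.mem_closure_iff]
    intro ε hε
    obtain ⟨σ, hσ⟩ := happrox x ε hε
    refine ⟨mv (σ, x), Submodule.subset_span ⟨(σ, x), rfl⟩, ?_⟩
    rw [dist_pi_lt_iff hε]
    intro i
    rw [Real.dist_eq, abs_sub_comm]
    exact hσ i
  have hC_cl : {v : Fin n → ℝ | ∃ μ : Measure X,
      (∀ i, Integrable (b i) μ) ∧ ∀ i, v i = ∫ y, b i y ∂μ}
      ⊆ closure (S : Set (Fin n → ℝ)) := by
    rintro v ⟨μ, hμint, hμrep⟩
    by_contra hv
    obtain ⟨f, u, hfu, hufv⟩ :=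
      geometric_hahn_banach_closed_point hconvS.closure isClosed_closure hv
    have hu0 : 0 < u := by
      have h0 : (0 : Fin n → ℝ) ∈ closure (S : Set (Fin n → ℝ)) :=
        subset_closure (S.zero_mem)
      have := hfu 0 h0
      rwa [map_zero] at this
    have hfS : ∀ w ∈ S, f w ≤ 0 := by
      intro w hw
      by_contra hpos
      push_neg at hpos
      have ht : ∀ t : ℝ, 0 ≤ t → t * f w < u := by
        intro t ht'
        have hmem : t • w ∈ S := by
          have := S.smul_mem ⟨t, ht'⟩ hw
          exact this
        have := hfu (t • w) (subset_closure hmem)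
        rwa [_root_.map_smul, smul_eq_mul] at this
      have h1 := ht ((u + 1) / f w) (by positivity)
      rw [div_mul_cancel₀ _ hpos.ne'] at h1
      linarith
    have hfcl : ∀ w ∈ closure (S : Set (Fin n → ℝ)), f w ≤ 0 := by
      intro w hw
      have hsub : closure (S : Set (Fin n → ℝ)) ⊆ f ⁻¹' Set.Iic 0 :=
        closure_minimal (fun z hz => hfS z hz) (IsClosed.preimage f.continuous isClosed_Iic)
      exact hsub hw
    set φ : Fin n → ℝ := fun i => f (Pi.single i 1) with hφ
    have hfeval : ∀ w : Fin n → ℝ, f w = ∑ i, w i * φ i := by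
      intro w
      conv_lhs => rw [← Finset.univ_sum_single w]
      rw [map_sum]
      apply Finset.sum_congr rfl
      intro i _
      rw [show (Pi.single i (w i) : Fin n → ℝ) = w i • (Pi.single i 1 : Fin n → ℝ) by
        rw [← Pi.single_smul, smul_eq_mul, mul_one]]
      rw [_root_.map_smul, smul_eq_mul]
    have hint2 : ∀ i, Integrable (fun y => b i y * φ i) μ := fun i => (hμint i).mul_const _
    have hfv : f v = ∫ y, ∑ i, b i y * φ i ∂μ := by
      rw [integral_finset_sum _ (fun i _ => hint2 i), hfeval]
      apply Finset.sum_congr rfl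
      intro i _
      rw [hμrep i, integral_mul_const]
    have hneg : f v ≤ 0 := by
      rw [hfv]
      apply integral_nonpos
      intro y
      have hy := hfcl (fun i => b i y) (hb_cl y)
      rw [hfeval] at hy
      exact hy
    linarith
  have hsS : s ∈ S := cone_mem_of_mem_interior_closure S (interior_mono hC_cl hs)
  obtain ⟨cf, hsupp, hsum⟩ := Submodule.mem_span_set.1 hsS
  have hsumR : ∑ v ∈ cf.support, ((cf v : ℝ≥0) : ℝ) • v = s := by
    rw [← hsum, Finsupp.sum]
    exact Finset.sum_congr rfl fun v _ => (NNReal.smul_def _ _).symm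
  obtain ⟨t', ht'sub, ht'card, c', hc'pos, hc'sum⟩ :=
    cone_caratheodory cf.support.card cf.support le_rfl _
      (fun v hv => by
        have : cf v ≠ 0 := Finsupp.mem_support_iff.1 hv
        exact_mod_cast pos_iff_ne_zero.2 this)
      s hsumR
  set k := t'.card with hk
  set eqv := t'.equivFin with heqv
  have hmem : ∀ j : Fin k, ∃ qq : Λ × X, mv qq = ((eqv.symm j : {x // x ∈ t'}) : Fin n → ℝ) := by
    intro j
    exact hsupp (ht'sub (eqv.symm j).2)
  choose q hq using hmem
  have hpos : ∀ j : Fin k, 0 < c' ((eqv.symm j : {x // x ∈ t'}) : Fin n → ℝ) :=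
    fun j => hc'pos _ (eqv.symm j).2
  have hrep : ∀ i, s i = ∑ j : Fin k,
      c' ((eqv.symm j : {x // x ∈ t'}) : Fin n → ℝ) * ∫ y, b i y ∂(δ (q j).1 (q j).2) := by
    intro i
    have h1 : ∑ v ∈ t', c' v * v i = s i := by
      have h2 := congrFun hc'sum i
      rw [Finset.sum_apply] at h2
      simpa [smul_eq_mul] using h2
    rw [← h1, ← Finset.sum_coe_sort t' (fun v => c' v * v i),
      ← Equiv.sum_comp eqv.symm (fun v : {x // x ∈ t'} => c' ↑v * (↑v : Fin n → ℝ) i)]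
    apply Finset.sum_congr rfl
    intro j _
    have h3 : (∫ y, b i y ∂(δ (q j).1 (q j).2))
        = ((eqv.symm j : {x // x ∈ t'}) : Fin n → ℝ) i := congrFun (hq j) i
    rw [h3]
  constructor
  · exact ⟨k, ht'card, fun j => c' ((eqv.symm j : {x // x ∈ t'}) : Fin n → ℝ),
      fun j => (q j).1, fun j => (q j).2, hpos, hrep⟩
  · set μ : Measure X := ∑ j : Fin k,
      (ENNReal.ofReal (c' ((eqv.symm j : {x // x ∈ t'}) : Fin n → ℝ))) • δ (q j).1 (q j).2
      with hμ
    have hcne : ∀ j : Fin k,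
        ENNReal.ofReal (c' ((eqv.symm j : {x // x ∈ t'}) : Fin n → ℝ)) ≠ ⊤ :=
      fun _ => ENNReal.ofReal_ne_top
    have hintμ' : ∀ i, ∀ j ∈ Finset.univ, Integrable (b i)
        ((ENNReal.ofReal (c' ((eqv.symm j : {x // x ∈ t'}) : Fin n → ℝ)))
          • δ (q j).1 (q j).2) :=
      fun i j _ => (hint _ _ i).smul_measure (hcne j)
    have hintμ : ∀ i, Integrable (b i) μ := by
      intro i
      rw [hμ, integrable_finset_sum_measure]
      exact hintμ' i
    refine ⟨μ, ?_, hintμ, ?_⟩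
    · refine Measure.AbsolutelyContinuous.mk ?_
      intro A hA hA0
      rw [hμ, Measure.finset_sum_apply]
      apply Finset.sum_eq_zero
      intro j _
      rw [Measure.smul_apply, hac (q j).1 (q j).2 hA0, smul_zero]
    · intro i
      rw [hμ, integral_finset_sum_measure (hintμ' i)]
      simp only [integral_smul_measure]
      rw [hrep i]
      apply Finset.sum_congr rfl
      intro j _
      rw [ENNReal.toReal_ofReal (hpos j).le, smul_eq_mul]
end

section
/- If g ∈ L²(ℝⁿ, ℂ) has compact support, then its Fourier transform f(z) = ∫_{ℝⁿ} g(x)·exp(i⟨x,z⟩) dx extends to an entire function on ℂⁿ. -/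
/-!
Restrict the integral to the cube `[-c, c]ⁿ`: there `g` is integrable (it is `L²` on a set of
finite measure) and the linear forms `z ↦ i ⟨x, z⟩` have norm at most some `K`. Near `z₀` the
integrand and its `z`-derivative are then dominated by `|g x| exp (K (‖z₀‖ + 1)) K`, so
differentiation under the integral sign applies at every `z₀ ∈ ℂⁿ`.
-/

open MeasureTheory

section LaplaceTransform

variable {α E : Type*} [MeasurableSpace α] {μ : Measure α}
  [NormedAddCommGroup E] [NormedSpace ℂ E]

theorem norm_cexp_apply_le {ℓ : E →L[ℂ] ℂ} {K R : ℝ} (hℓ : ‖ℓ‖ ≤ K) {z : E} (hz : ‖z‖ ≤ R) :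
    ‖Complex.exp (ℓ z)‖ ≤ Real.exp (K * R) :=
  (Complex.norm_exp_le_exp_norm _).trans <| Real.exp_le_exp.2 <|
    (ℓ.le_opNorm z).trans <| mul_le_mul hℓ hz (norm_nonneg z) ((norm_nonneg ℓ).trans hℓ)

theorem hasFDerivAt_integral_mul_cexp {g : α → ℂ} (hg : Integrable g μ)
    {L : α → E →L[ℂ] ℂ} (hL : AEStronglyMeasurable L μ) {K : ℝ} (hK : ∀ᵐ a ∂μ, ‖L a‖ ≤ K)
    (z₀ : E) :
    HasFDerivAt (fun z => ∫ a, g a * Complex.exp (L a z) ∂μ)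
      (∫ a, (g a * Complex.exp (L a z₀)) • L a ∂μ) z₀ := by
  have hexp : ∀ z, AEStronglyMeasurable (fun a => Complex.exp (L a z)) μ := fun z =>
    Complex.continuous_exp.comp_aestronglyMeasurable (hL.apply_continuousLinearMap z)
  have hmeas : ∀ z, AEStronglyMeasurable (fun a => g a * Complex.exp (L a z)) μ := fun z =>
    hg.aestronglyMeasurable.mul (hexp z)
  have hint : Integrable (fun a => g a * Complex.exp (L a z₀)) μ :=
    hg.mul_bdd (hexp z₀) <| by
      filter_upwards [hK] with a ha using norm_cexp_apply_le ha le_rfl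
  refine hasFDerivAt_integral_of_dominated_of_fderiv_le
    (F' := fun z a => (g a * Complex.exp (L a z)) • L a)
    (bound := fun a => ‖g a‖ * (Real.exp (K * (‖z₀‖ + 1)) * K)) (Metric.ball_mem_nhds z₀ one_pos)
    (.of_forall hmeas) hint ((hmeas z₀).smul hL) ?_ (hg.norm.mul_const _) ?_
  · filter_upwards [hK] with a ha z hz
    have hexp_le := norm_cexp_apply_le ha (norm_lt_of_mem_ball hz).le
    calc ‖(g a * Complex.exp (L a z)) • L a‖
        = ‖g a‖ * ‖Complex.exp (L a z)‖ * ‖L a‖ := by rw [norm_smul, norm_mul]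
      _ ≤ ‖g a‖ * Real.exp (K * (‖z₀‖ + 1)) * K := by gcongr
      _ = ‖g a‖ * (Real.exp (K * (‖z₀‖ + 1)) * K) := mul_assoc _ _ _
  · refine .of_forall fun a z _ => ?_
    simpa only [smul_smul] using ((L a).hasFDerivAt.cexp).const_mul (g a)

theorem differentiable_integral_mul_cexp {g : α → ℂ} (hg : Integrable g μ)
    {L : α → E →L[ℂ] ℂ} (hL : AEStronglyMeasurable L μ) {K : ℝ} (hK : ∀ᵐ a ∂μ, ‖L a‖ ≤ K) :
    Differentiable ℂ (fun z => ∫ a, g a * Complex.exp (L a z) ∂μ) :=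
  fun z₀ => (hasFDerivAt_integral_mul_cexp hg hL hK z₀).differentiableAt

end LaplaceTransform

section FourierPhase

variable {ι : Type*} [Fintype ι]

noncomputable def fourierPhase (x : ι → ℝ) : (ι → ℂ) →L[ℂ] ℂ :=
  ∑ i, (Complex.I * x i) • ContinuousLinearMap.proj i

theorem fourierPhase_apply (x : ι → ℝ) (z : ι → ℂ) :
    fourierPhase x z = Complex.I * ∑ i, x i * z i := by
  simp [fourierPhase, Finset.mul_sum, mul_assoc]

theorem continuous_fourierPhase : Continuous (fourierPhase (ι := ι)) := by
  unfold fourierPhase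
  fun_prop

end FourierPhase

/-- Paley–Wiener type statement: the Fourier transform of a compactly supported
`L²` function on `ℝⁿ` extends to an entire function on `ℂⁿ`. -/
theorem fourier_compact_support_entire (n : ℕ) (g : (Fin n → ℝ) → ℂ)
    (hg : MemLp g 2) (c : ℝ)
    (hsupp : ∀ᵐ x : Fin n → ℝ, x ∉ Set.Icc (fun _ => -c) (fun _ => c) → g x = 0) :
    ∃ F : (Fin n → ℂ) → ℂ, Differentiable ℂ F ∧
      ∀ z : Fin n → ℝ, F (fun i => (z i : ℂ))
        = ∫ x, g x * Complex.exp (Complex.I * ((∑ i, x i * z i : ℝ) : ℂ)) := by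
  set s : Set (Fin n → ℝ) := Set.Icc (fun _ => -c) (fun _ => c)
  have : IsFiniteMeasure (volume.restrict s) :=
    isFiniteMeasure_restrict.2 isCompact_Icc.measure_lt_top.ne
  have hint : IntegrableOn g s := (hg.restrict s).integrable one_le_two
  obtain ⟨K, hK⟩ :=
    isCompact_Icc.exists_bound_of_continuousOn (continuous_fourierPhase (ι := Fin n)).continuousOn
  refine ⟨fun z => ∫ x in s, g x * Complex.exp (fourierPhase x z),
    differentiable_integral_mul_cexp hint continuous_fourierPhase.aestronglyMeasurable
      (ae_restrict_of_forall_mem measurableSet_Icc hK), fun z => ?_⟩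
  dsimp only
  rw [setIntegral_eq_integral_of_ae_compl_eq_zero]
  · simp [fourierPhase_apply]
  · filter_upwards [hsupp] with x hx hxs
    rw [hx hxs, zero_mul]
end

section
/- Let s = (s_i)_{i∈ℕ} be a real sequence and define the derivative sequence ∂s by the Riesz functional relation L_{∂s}(p) = −L_s(p') for all polynomials p ∈ ℝ[x]. If there exists C > 0 such that both Σ_{k=0}^d C(d,k)·|L_s(x^k(1−x)^{d−k})| < C and Σ_{k=0}^d C(d,k)·|L_{∂s}(x^k(1−x)^{d−k})| < C hold for all d ∈ ℕ, then there exists a function f : [0,1] → ℝ of bounded variation such that s_i = ∫_0^1 x^i·f(x) dx for all i ∈ ℕ. -/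
open MeasureTheory Polynomial

open Filter Finset Topology

/-!
Put `β n k = L_{∂s}(b_{n,k})` for the Bernstein polynomials `b_{n,k}`. The discrete signed
measures `νₙ = ∑ₖ β n k • δ_{k/n}` have total variation at most `C`, and `∫ p dνₙ → L_{∂s}(p)` for
every polynomial `p`, because `Xʲ = ∑ₖ (C(k,j) / C(n,j)) b_{n,k}` and
`C(k,j) / C(n,j) = (k/n)ʲ + O(j² / n)`. The distribution functions `Fₙ(x) = νₙ([0,x])` are
differences of monotone functions with values in `[0, C]`, so by Helly's selection theorem a
subsequence converges almost everywhere to a function `f` of bounded variation. Finally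
`∫₀¹ xⁱ Fₙ(x) dx = ∫ (1 - t^{i+1}) / (i+1) dνₙ(t) → L_{∂s}((1 - X^{i+1}) / (i+1)) = L_s(Xⁱ) = sᵢ`,
and dominated convergence identifies this limit with `∫₀¹ xⁱ f(x) dx`.
-/

theorem eVariationOn_sub_le {α E : Type*} [LinearOrder α] [SeminormedAddCommGroup E]
    (f g : α → E) (s : Set α) :
    eVariationOn (f - g) s ≤ eVariationOn f s + eVariationOn g s := by
  refine iSup_le fun ⟨n, u, hu, us⟩ => ?_
  calc ∑ i ∈ range n, edist ((f - g) (u (i + 1))) ((f - g) (u i))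
      ≤ ∑ i ∈ range n, (edist (f (u (i + 1))) (f (u i)) + edist (g (u (i + 1))) (g (u i))) := by
        refine sum_le_sum fun i _ => ?_
        simpa only [Pi.sub_apply, sub_eq_add_neg, edist_neg_neg] using
          edist_add_add_le (f (u (i + 1))) (-g (u (i + 1))) (f (u i)) (-g (u i))
    _ ≤ eVariationOn f s + eVariationOn g s := by
        rw [sum_add_distrib]
        exact add_le_add (eVariationOn.sum_le hu us) (eVariationOn.sum_le hu us)

theorem Monotone.boundedVariationOn_Icc {f : ℝ → ℝ} (hf : Monotone f) (a b : ℝ) :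
    BoundedVariationOn f (Set.Icc a b) := by
  simpa using (hf.monotoneOn Set.univ).locallyBoundedVariationOn a b trivial trivial

theorem BoundedVariationOn.sub {α E : Type*} [LinearOrder α] [SeminormedAddCommGroup E]
    {f g : α → E} {s : Set α} (hf : BoundedVariationOn f s) (hg : BoundedVariationOn g s) :
    BoundedVariationOn (f - g) s :=
  ne_top_of_le_ne_top (ENNReal.add_ne_top.2 ⟨hf, hg⟩) (eVariationOn_sub_le f g s)

/-- At a continuity point `x` of `g = limsup uₙ`, compare `x` with a rational `q < x` close to
it: `liminf uₙ x ≥ lim uₙ q = g q ≈ g x`. -/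
theorem tendsto_limsup_of_continuousAt {u : ℕ → ℝ → ℝ} {a b : ℝ} (hu : ∀ n, Monotone (u n))
    (hab : ∀ n x, u n x ∈ Set.Icc a b) (hq : ∀ q : ℚ, ∃ l, Tendsto (fun n => u n q) atTop (𝓝 l))
    {x : ℝ} (hx : ContinuousAt (fun y => limsup (fun n => u n y) atTop) x) :
    Tendsto (fun n => u n x) atTop (𝓝 (limsup (fun n => u n x) atTop)) := by
  have hbdd : ∀ y, IsBoundedUnder (· ≤ ·) atTop (fun n => u n y) :=
    fun y => isBoundedUnder_of ⟨b, fun n => (hab n y).2⟩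
  have hbdd' : ∀ y, IsBoundedUnder (· ≥ ·) atTop (fun n => u n y) :=
    fun y => isBoundedUnder_of ⟨a, fun n => (hab n y).1⟩
  refine tendsto_of_le_liminf_of_limsup_le (le_of_forall_sub_le fun ε hε => ?_) le_rfl
    (hbdd x) (hbdd' x)
  obtain ⟨δ, hδ, hclose⟩ := Metric.continuousAt_iff.1 hx ε hε
  obtain ⟨q, hxq, hqx⟩ := exists_rat_btwn (sub_lt_self x hδ)
  obtain ⟨l, hl⟩ := hq q
  have hgq : |limsup (fun n => u n q) atTop - limsup (fun n => u n x) atTop| < ε := by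
    rw [← Real.dist_eq]
    exact hclose (by rw [Real.dist_eq, abs_sub_lt_iff]; constructor <;> linarith)
  calc limsup (fun n => u n x) atTop - ε ≤ limsup (fun n => u n q) atTop := by
        linarith [(abs_sub_lt_iff.1 hgq).2]
    _ = liminf (fun n => u n q) atTop := hl.limsup_eq.trans hl.liminf_eq.symm
    _ ≤ liminf (fun n => u n x) atTop :=
        liminf_le_liminf (Eventually.of_forall fun n => hu n hqx.le) (hbdd' q)
          (hbdd x).isCoboundedUnder_ge

/-- **Helly's selection theorem** for uniformly bounded monotone functions. -/
theorem exists_monotone_subseq_tendsto_ae {u : ℕ → ℝ → ℝ} {a b : ℝ} (hu : ∀ n, Monotone (u n))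
    (hab : ∀ n x, u n x ∈ Set.Icc a b) :
    ∃ g : ℝ → ℝ, Monotone g ∧ ∃ φ : ℕ → ℕ, StrictMono φ ∧
      ∀ᵐ x, Tendsto (fun j => u (φ j) x) atTop (𝓝 (g x)) := by
  obtain ⟨c, φ, hφ, hc⟩ :=
    CompactSpace.tendsto_subseq fun n (q : ℚ) => (⟨u n q, hab n q⟩ : Set.Icc a b)
  have hq (q : ℚ) : Tendsto (fun j => u (φ j) q) atTop (𝓝 (c q)) :=
    (continuous_subtype_val.tendsto _).comp (((continuous_apply q).tendsto c).comp hc)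
  set g : ℝ → ℝ := fun x => limsup (fun j => u (φ j) x) atTop
  have hg : Monotone g := fun x y hxy =>
    limsup_le_limsup (Eventually.of_forall fun j => hu (φ j) hxy)
      (isBoundedUnder_of ⟨a, fun j => (hab (φ j) x).1⟩).isCoboundedUnder_le
      (isBoundedUnder_of ⟨b, fun j => (hab (φ j) y).2⟩)
  refine ⟨g, hg, φ, hφ, ?_⟩
  have hcont : ∀ᵐ x, ContinuousAt g x := by
    rw [ae_iff]
    exact hg.countable_not_continuousAt.measure_zero _
  filter_upwards [hcont] with x hx
  exact tendsto_limsup_of_continuousAt (fun j => hu (φ j)) (fun j => hab (φ j))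
    (fun q => ⟨c q, hq q⟩) hx

theorem exists_boundedVariationOn_subseq_tendsto_ae {P N : ℕ → ℝ → ℝ} {a b : ℝ}
    (hP : ∀ n, Monotone (P n)) (hN : ∀ n, Monotone (N n))
    (hPab : ∀ n x, P n x ∈ Set.Icc a b) (hNab : ∀ n x, N n x ∈ Set.Icc a b) :
    ∃ f : ℝ → ℝ, (∀ s t, BoundedVariationOn f (Set.Icc s t)) ∧ ∃ φ : ℕ → ℕ, StrictMono φ ∧
      ∀ᵐ x, Tendsto (fun j => P (φ j) x - N (φ j) x) atTop (𝓝 (f x)) := by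
  obtain ⟨gP, hgP, φ, hφ, hPlim⟩ := exists_monotone_subseq_tendsto_ae hP hPab
  obtain ⟨gN, hgN, ψ, hψ, hNlim⟩ :=
    exists_monotone_subseq_tendsto_ae (fun j => hN (φ j)) (fun j => hNab (φ j))
  refine ⟨gP - gN, fun s t => ?_, φ ∘ ψ, hφ.comp hψ, ?_⟩
  · exact (hgP.boundedVariationOn_Icc s t).sub (hgN.boundedVariationOn_Icc s t)
  · filter_upwards [hPlim, hNlim] with x hPx hNx
    exact (hPx.comp hψ.tendsto_atTop).sub hNx

theorem IntervalIntegrable.ite_le {g : ℝ → ℝ} {a b : ℝ} (hg : IntervalIntegrable g volume a b)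
    (c : ℝ) : IntervalIntegrable (fun x => if c ≤ x then g x else 0) volume a b := by
  have hind : (fun x => if c ≤ x then g x else 0) = (Set.Ici c).indicator g := by
    ext x; simp [Set.indicator_apply]
  rw [hind, intervalIntegrable_iff]
  exact hg.def'.indicator measurableSet_Ici

theorem intervalIntegral.integral_ite_le {g : ℝ → ℝ} {a b c : ℝ} (hac : a ≤ c) (hcb : c ≤ b)
    (hg : IntervalIntegrable g volume a b) :
    ∫ x in a..b, (if c ≤ x then g x else 0) = ∫ x in c..b, g x := by
  have hint := hg.ite_le c
  have hne : ∀ᵐ x, x ≠ c := by simp [ae_iff, measure_singleton]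
  have hc : c ∈ Set.uIcc a b := Set.mem_uIcc_of_le hac hcb
  rw [← intervalIntegral.integral_add_adjacent_intervals (b := c)
      (hint.mono_set (Set.uIcc_subset_uIcc Set.left_mem_uIcc hc))
      (hint.mono_set (Set.uIcc_subset_uIcc hc Set.right_mem_uIcc))]
  have hzero : ∫ x in a..c, (if c ≤ x then g x else 0) = 0 := by
    refine (intervalIntegral.integral_congr_ae ?_).trans intervalIntegral.integral_zero
    filter_upwards [hne] with x hxc hx
    rw [Set.uIoc_of_le hac] at hx
    simp [(lt_of_le_of_ne hx.2 hxc).not_ge]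
  rw [hzero, zero_add]
  refine intervalIntegral.integral_congr fun x hx => ?_
  simp [((Set.uIcc_of_le hcb) ▸ hx).1]

theorem tendsto_integral_mul_of_tendsto_ae {F : ℕ → ℝ → ℝ} {f g : ℝ → ℝ} {C a b : ℝ}
    (hg : Continuous g) (hF : ∀ j, AEStronglyMeasurable (F j)) (hFC : ∀ j x, |F j x| ≤ C)
    (hlim : ∀ᵐ x, Tendsto (fun j => F j x) atTop (𝓝 (f x))) :
    Tendsto (fun j => ∫ x in a..b, g x * F j x) atTop (𝓝 (∫ x in a..b, g x * f x)) := by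
  refine intervalIntegral.tendsto_integral_filter_of_dominated_convergence (fun x => |g x| * C)
    (Eventually.of_forall fun j => (hg.aestronglyMeasurable.mul (hF j)).restrict)
    (Eventually.of_forall fun j => Eventually.of_forall fun x _ => ?_)
    ((hg.abs.mul continuous_const).intervalIntegrable a b) ?_
  · rw [norm_mul, Real.norm_eq_abs, Real.norm_eq_abs]
    exact mul_le_mul_of_nonneg_left (hFC j x) (abs_nonneg _)
  · filter_upwards [hlim] with x hx _ using hx.const_mul (g x)

noncomputable def gridCDF (n : ℕ) (w : ℕ → ℝ) (x : ℝ) : ℝ :=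
  ∑ k ∈ range (n + 1), if (k : ℝ) / n ≤ x then w k else 0

section gridCDF

variable {n : ℕ} {w : ℕ → ℝ}

theorem gridCDF_monotone (hw : ∀ k, 0 ≤ w k) : Monotone (gridCDF n w) := fun x y hxy =>
  sum_le_sum fun k _ => by
    split_ifs with hx hy hy
    exacts [le_rfl, absurd (hx.trans hxy) hy, hw k, le_rfl]

theorem gridCDF_mem_Icc (hw : ∀ k, 0 ≤ w k) (x : ℝ) :
    gridCDF n w x ∈ Set.Icc 0 (∑ k ∈ range (n + 1), w k) :=
  ⟨sum_nonneg fun k _ => by split_ifs; exacts [hw k, le_rfl],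
    sum_le_sum fun k _ => by split_ifs; exacts [le_rfl, hw k]⟩

theorem abs_gridCDF_le (x : ℝ) : |gridCDF n w x| ≤ ∑ k ∈ range (n + 1), |w k| :=
  (abs_sum_le_sum_abs _ _).trans <| sum_le_sum fun k _ => by
    split_ifs <;> simp

theorem gridCDF_posPart_sub_negPart (x : ℝ) :
    gridCDF n (fun k => (w k)⁺) x - gridCDF n (fun k => (w k)⁻) x = gridCDF n w x := by
  rw [gridCDF, gridCDF, gridCDF, ← sum_sub_distrib]
  refine sum_congr rfl fun k _ => ?_
  split_ifs
  exacts [posPart_sub_negPart (w k), sub_zero 0]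

theorem measurable_gridCDF : Measurable (gridCDF n w) :=
  Finset.measurable_sum _ fun _ _ =>
    Measurable.ite (measurableSet_le measurable_const measurable_id) measurable_const
      measurable_const

theorem integral_pow_mul_gridCDF (i : ℕ) :
    ∫ x in (0 : ℝ)..1, x ^ i * gridCDF n w x =
      ∑ k ∈ range (n + 1), (∫ x in ((k : ℝ) / n)..1, x ^ i) * w k := by
  simp only [gridCDF, mul_sum, mul_ite, mul_zero]
  have hint (k : ℕ) : IntervalIntegrable (fun x : ℝ => x ^ i * w k) volume 0 1 :=
    ((continuous_pow i).mul continuous_const).intervalIntegrable 0 1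
  rw [intervalIntegral.integral_finsetSum fun k _ => (hint k).ite_le _]
  refine sum_congr rfl fun k hk => ?_
  have hkn : (k : ℝ) ≤ n := Nat.cast_le.2 (Nat.lt_succ_iff.1 (mem_range.1 hk))
  rw [intervalIntegral.integral_ite_le (by positivity) (div_le_one_of_le₀ hkn n.cast_nonneg)
    (hint k), intervalIntegral.integral_mul_const]

end gridCDF

theorem exists_boundedVariationOn_subseq_tendsto_gridCDF {w : ℕ → ℕ → ℝ} {C : ℝ}
    (hw : ∀ n, ∑ k ∈ range (n + 1), |w n k| ≤ C) :
    ∃ f : ℝ → ℝ, (∀ s t, BoundedVariationOn f (Set.Icc s t)) ∧ ∃ φ : ℕ → ℕ, StrictMono φ ∧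
      ∀ᵐ x, Tendsto (fun j => gridCDF (φ j) (w (φ j)) x) atTop (𝓝 (f x)) := by
  have hmem {v : ℕ → ℕ → ℝ} (hv : ∀ n k, 0 ≤ v n k) (hvw : ∀ n k, v n k ≤ |w n k|) (n : ℕ)
      (x : ℝ) : gridCDF n (v n) x ∈ Set.Icc 0 C :=
    Set.Icc_subset_Icc_right ((sum_le_sum fun k _ => hvw n k).trans (hw n))
      (gridCDF_mem_Icc (hv n) x)
  simpa only [gridCDF_posPart_sub_negPart] using
    exists_boundedVariationOn_subseq_tendsto_ae
      (fun n => gridCDF_monotone fun k => posPart_nonneg (w n k))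
      (fun n => gridCDF_monotone fun k => negPart_nonneg (w n k))
      (hmem (fun n k => posPart_nonneg _) fun n k => sup_le (le_abs_self _) (abs_nonneg _))
      (hmem (fun n k => negPart_nonneg _) fun n k => sup_le (neg_le_abs _) (abs_nonneg _))

theorem bernsteinPolynomial.sum_choose_mul (R : Type*) [CommRing R] {n j : ℕ} (hjn : j ≤ n) :
    ∑ k ∈ range (n + 1), (k.choose j : R[X]) * bernsteinPolynomial R n k =
      (n.choose j : R[X]) * X ^ j := by
  have hterm (m : ℕ) : ((j + m).choose j : R[X]) * bernsteinPolynomial R n (j + m) =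
      (n.choose j : R[X]) * X ^ j * bernsteinPolynomial R (n - j) m := by
    have hch : (n.choose (j + m) * (j + m).choose j : R[X]) = n.choose j * (n - j).choose m := by
      have h := Nat.choose_mul (n := n) (Nat.le_add_right j m)
      rw [Nat.add_sub_cancel_left] at h
      exact_mod_cast congrArg (Nat.cast : ℕ → R[X]) h
    simp only [bernsteinPolynomial, Nat.sub_add_eq, pow_add]
    linear_combination (X ^ j * X ^ m * (1 - X) ^ (n - j - m)) * hch
  rw [show n + 1 = j + (n - j + 1) by omega, sum_range_add,
    sum_eq_zero fun k hk => by simp [Nat.choose_eq_zero_of_lt (mem_range.1 hk)], zero_add,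
    sum_congr rfl fun m _ => hterm m, ← mul_sum, bernsteinPolynomial.sum, mul_one]

theorem Nat.descFactorial_mul_pow_le_pow_mul_descFactorial {k n : ℕ} (hkn : k ≤ n) (j : ℕ) :
    k.descFactorial j * n ^ j ≤ k ^ j * n.descFactorial j := by
  rw [Nat.descFactorial_eq_prod_range, Nat.descFactorial_eq_prod_range, pow_eq_prod_const,
    pow_eq_prod_const, ← prod_mul_distrib, ← prod_mul_distrib]
  refine prod_le_prod' fun i _ => ?_
  rw [Nat.sub_mul, Nat.mul_sub, mul_comm k i]
  exact Nat.sub_le_sub_left (Nat.mul_le_mul_left i hkn) _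

theorem abs_div_pow_sub_choose_div_choose_le {j k n : ℕ} (hjn : j ≤ n) (hkn : k ≤ n) :
    |((k : ℝ) / n) ^ j - (k.choose j : ℝ) / n.choose j| ≤ (j : ℝ) ^ 2 / n := by
  rcases j.eq_zero_or_pos with rfl | hj
  · simp
  have hn : (0 : ℝ) < n := by exact_mod_cast hj.trans_le hjn
  have hdesc : (0 : ℝ) < n.descFactorial j := by
    exact_mod_cast Nat.descFactorial_pos.2 hjn
  set a : ℝ := k / n
  set b : ℝ := ((k - j : ℕ) : ℝ) / n
  set r : ℝ := (k.descFactorial j : ℝ) / n.descFactorial j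
  have hr : (k.choose j : ℝ) / n.choose j = r := by
    simp only [r, Nat.descFactorial_eq_factorial_mul_choose, Nat.cast_mul]
    exact (mul_div_mul_left _ _ (by positivity)).symm
  have hra : r ≤ a ^ j := by
    rw [div_pow, div_le_div_iff₀ hdesc (by positivity)]
    exact_mod_cast Nat.descFactorial_mul_pow_le_pow_mul_descFactorial hkn j
  have hbr : b ^ j ≤ r := by
    rw [div_pow, div_le_div_iff₀ (by positivity) hdesc]
    exact_mod_cast Nat.mul_le_mul ((Nat.pow_le_pow_left (by omega) j).trans
      (Nat.pow_sub_le_descFactorial k j)) (Nat.descFactorial_le_pow n j)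
  have hba : b ≤ a := div_le_div_of_nonneg_right (by exact_mod_cast k.sub_le j) n.cast_nonneg
  have ha : a ≤ 1 := div_le_one_of_le₀ (by exact_mod_cast hkn) n.cast_nonneg
  have hab : a - b ≤ j / n := by
    rw [← sub_div]
    gcongr
    have : k ≤ k - j + j := le_tsub_add
    rw [sub_le_iff_le_add']
    exact_mod_cast this
  have hpow : a ^ j - b ^ j ≤ j * (a - b) := by
    have hmax : max |a| |b| ^ (j - 1) ≤ 1 := by
      refine pow_le_one₀ (by positivity) (max_le ?_ ?_) <;>
        rw [abs_le] <;> constructor <;> linarith [show 0 ≤ b by positivity]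
    calc a ^ j - b ^ j ≤ |a - b| * j * max |a| |b| ^ (j - 1) :=
          (le_abs_self _).trans (abs_pow_sub_pow_le a b j)
      _ ≤ |a - b| * j * 1 := by gcongr
      _ = j * (a - b) := by rw [abs_of_nonneg (sub_nonneg.2 hba)]; ring
  rw [hr, abs_of_nonneg (sub_nonneg.2 hra)]
  calc a ^ j - r ≤ a ^ j - b ^ j := by linarith
    _ ≤ j * (j / n) := hpow.trans (by gcongr)
    _ = (j : ℝ) ^ 2 / n := by ring

section BernsteinFunctional

variable (Λ : ℝ[X] →ₗ[ℝ] ℝ)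

theorem sum_choose_div_choose_mul_bernstein {n j : ℕ} (hjn : j ≤ n) :
    ∑ k ∈ range (n + 1), (k.choose j : ℝ) / n.choose j * Λ (bernsteinPolynomial ℝ n k) =
      Λ (X ^ j) := by
  have h := congrArg Λ (bernsteinPolynomial.sum_choose_mul ℝ hjn)
  simp only [map_sum, ← C_eq_natCast, ← smul_eq_C_mul, map_smul, smul_eq_mul] at h
  have hchoose : (n.choose j : ℝ) ≠ 0 := by exact_mod_cast (Nat.choose_pos hjn).ne'
  simp_rw [div_mul_eq_mul_div, ← sum_div, h]
  field_simp

theorem abs_sum_div_pow_mul_bernstein_sub_le {n j : ℕ} (hjn : j ≤ n) :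
    |∑ k ∈ range (n + 1), ((k : ℝ) / n) ^ j * Λ (bernsteinPolynomial ℝ n k) - Λ (X ^ j)| ≤
      (j : ℝ) ^ 2 / n * ∑ k ∈ range (n + 1), |Λ (bernsteinPolynomial ℝ n k)| := by
  rw [← sum_choose_div_choose_mul_bernstein Λ hjn, ← sum_sub_distrib, mul_sum]
  refine (abs_sum_le_sum_abs _ _).trans (sum_le_sum fun k hk => ?_)
  rw [← sub_mul, abs_mul]
  exact mul_le_mul_of_nonneg_right
    (abs_div_pow_sub_choose_div_choose_le hjn (Nat.lt_succ_iff.1 (mem_range.1 hk))) (abs_nonneg _)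

variable {Λ} {C : ℝ}

theorem tendsto_sum_div_pow_mul_bernstein
    (hΛ : ∀ n, ∑ k ∈ range (n + 1), |Λ (bernsteinPolynomial ℝ n k)| ≤ C) (j : ℕ) :
    Tendsto (fun n : ℕ => ∑ k ∈ range (n + 1), ((k : ℝ) / n) ^ j * Λ (bernsteinPolynomial ℝ n k))
      atTop (𝓝 (Λ (X ^ j))) := by
  rw [← tendsto_sub_nhds_zero_iff]
  refine squeeze_zero_norm' ?_ (tendsto_const_div_atTop_nhds_zero_nat ((j : ℝ) ^ 2 * C))
  filter_upwards [eventually_ge_atTop j] with n hjn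
  calc _ ≤ (j : ℝ) ^ 2 / n * ∑ k ∈ range (n + 1), |Λ (bernsteinPolynomial ℝ n k)| :=
        abs_sum_div_pow_mul_bernstein_sub_le Λ hjn
    _ ≤ (j : ℝ) ^ 2 / n * C := by gcongr; exact hΛ n
    _ = (j : ℝ) ^ 2 * C / n := div_mul_eq_mul_div _ _ _

theorem tendsto_sum_eval_mul_bernstein
    (hΛ : ∀ n, ∑ k ∈ range (n + 1), |Λ (bernsteinPolynomial ℝ n k)| ≤ C) (p : ℝ[X]) :
    Tendsto
      (fun n : ℕ => ∑ k ∈ range (n + 1), p.eval ((k : ℝ) / n) * Λ (bernsteinPolynomial ℝ n k))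
      atTop (𝓝 (Λ p)) := by
  induction p using Polynomial.induction_on' with
  | add p q hp hq => simpa only [eval_add, add_mul, sum_add_distrib, map_add] using hp.add hq
  | monomial j c =>
    simpa only [eval_smul, eval_pow, eval_X, smul_eq_mul, mul_assoc, ← mul_sum,
      ← C_mul_X_pow_eq_monomial, ← smul_eq_C_mul, map_smul] using
      (tendsto_sum_div_pow_mul_bernstein hΛ j).const_mul c

end BernsteinFunctional

noncomputable def tailMoment (i : ℕ) : ℝ[X] := ((i : ℝ) + 1)⁻¹ • (1 - X ^ (i + 1))

theorem eval_tailMoment (i : ℕ) (c : ℝ) : (tailMoment i).eval c = ∫ x in c..1, x ^ i := by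
  rw [integral_pow, tailMoment, eval_smul, eval_sub, eval_one, eval_pow, eval_X, one_pow,
    smul_eq_mul]
  ring

theorem derivative_tailMoment (i : ℕ) : derivative (tailMoment i) = -X ^ i := by
  have : ((i : ℝ) + 1) ≠ 0 := by positivity
  rw [tailMoment, derivative_smul, derivative_sub, derivative_one, derivative_X_pow,
    Nat.add_sub_cancel, zero_sub, smul_neg, ← smul_eq_C_mul, smul_smul,
    Nat.cast_add_one, inv_mul_cancel₀ this, one_smul]

theorem absCont_BV_density_general (s : ℕ → ℝ)
    (L Ld : Polynomial ℝ →ₗ[ℝ] ℝ)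
    (hL : ∀ i : ℕ, L (X ^ i) = s i)
    (hd : ∀ p : Polynomial ℝ, Ld p = -(L (derivative p)))
    (C : ℝ)
    (h2 : ∀ d : ℕ, ∑ k ∈ Finset.range (d + 1),
      (d.choose k : ℝ) * |Ld (X ^ k * (1 - X) ^ (d - k))| < C) :
    ∃ f : ℝ → ℝ, BoundedVariationOn f (Set.Icc 0 1) ∧
      ∀ i : ℕ, s i = ∫ x in (0:ℝ)..1, x ^ i * f x := by
  set β : ℕ → ℕ → ℝ := fun n k => Ld (bernsteinPolynomial ℝ n k)
  have hβ (n : ℕ) : ∑ k ∈ Finset.range (n + 1), |β n k| ≤ C := by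
    simpa only [β, bernsteinPolynomial, ← C_eq_natCast, ← smul_eq_C_mul, smul_mul_assoc,
      map_smul, smul_eq_mul, abs_mul, Nat.abs_cast] using (h2 n).le
  have hmoment (i : ℕ) :
      Tendsto (fun n => ∫ x in (0:ℝ)..1, x ^ i * gridCDF n (β n) x) atTop (𝓝 (s i)) := by
    have hval : Ld (tailMoment i) = s i := by rw [hd, derivative_tailMoment, map_neg, neg_neg, hL]
    simpa only [integral_pow_mul_gridCDF, ← eval_tailMoment, hval] using
      tendsto_sum_eval_mul_bernstein hβ (tailMoment i)
  obtain ⟨f, hf, φ, hφ, hlim⟩ := exists_boundedVariationOn_subseq_tendsto_gridCDF hβ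
  refine ⟨f, hf 0 1, fun i => tendsto_nhds_unique ((hmoment i).comp hφ.tendsto_atTop) ?_⟩
  exact tendsto_integral_mul_of_tendsto_ae (continuous_pow i)
    (fun _ => measurable_gridCDF.aestronglyMeasurable)
    (fun j x => (abs_gridCDF_le x).trans (hβ (φ j))) hlim

/-- If both the Bernstein sums of a sequence `s` and of its derivative sequence `∂s`
(defined via `L_{∂s}(p) = −L_s(p')`) are uniformly bounded, then `s` is represented by a
density of bounded variation on `[0,1]`. -/
theorem absCont_BV_density (s ds : ℕ → ℝ)
    (L Ld : Polynomial ℝ →ₗ[ℝ] ℝ)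
    (hL : ∀ i : ℕ, L (X ^ i) = s i) (hLd : ∀ i : ℕ, Ld (X ^ i) = ds i)
    (hd : ∀ p : Polynomial ℝ, Ld p = -(L (derivative p)))
    (C : ℝ) (hC : 0 < C)
    (h1 : ∀ d : ℕ, ∑ k ∈ Finset.range (d + 1),
      (d.choose k : ℝ) * |L (X ^ k * (1 - X) ^ (d - k))| < C)
    (h2 : ∀ d : ℕ, ∑ k ∈ Finset.range (d + 1),
      (d.choose k : ℝ) * |Ld (X ^ k * (1 - X) ^ (d - k))| < C) :
    ∃ f : ℝ → ℝ, BoundedVariationOn f (Set.Icc 0 1) ∧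
      ∀ i : ℕ, s i = ∫ x in (0:ℝ)..1, x ^ i * f x :=
  absCont_BV_density_general s L Ld hL hd C h2
end
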